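/- If a density matrix ρ on H_A⊗H_B satisfies (1⊗T)(ρ) ≥ 0 and A_i⊗B_i are operators with Σ_i A_i†A_i ⊗ B_i†B_i = 1, then the output ρ' = Σ_i (A_i⊗B_i) ρ (A_i†⊗B_i†) of the separable superoperator also satisfies (1⊗T)(ρ') ≥ 0. (PPT is preserved under separable superoperators.) -/
import Mathlib


open Matrix Kronecker
open scoped ComplexOrder

def ptranspose {nA nB : Type*} (ρ : Matrix (nA × nB) (nA × nB) ℂ) :
    Matrix (nA × nB) (nA × nB) ℂ :=
  fun p q => ρ (p.1, q.2) (q.1, p.2)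

lemma sum_swap13 {α β : Type*} [Fintype α] [Fintype β] (f : α → β → α → ℂ) :
    ∑ a, ∑ b, ∑ c, f a b c = ∑ c, ∑ b, ∑ a, f a b c := by
  rw [Finset.sum_comm]
  refine (Finset.sum_congr rfl fun b _ => Finset.sum_comm).trans ?_
  rw [Finset.sum_comm]

lemma pt_conj {nA nB : Type*} [Fintype nA] [Fintype nB]
    (ρ : Matrix (nA × nB) (nA × nB) ℂ) (A : Matrix nA nA ℂ) (B : Matrix nB nB ℂ) :
    ptranspose ((A ⊗ₖ B) * ρ * (A ⊗ₖ B)ᴴ)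
      = (A ⊗ₖ B.map star) * ptranspose ρ * (A ⊗ₖ B.map star)ᴴ := by
  ext p q
  simp only [ptranspose, Matrix.mul_apply, conjTranspose_apply, kroneckerMap_apply,
    Matrix.map_apply, Fintype.sum_prod_type, Finset.sum_mul, Finset.mul_sum]
  refine Finset.sum_congr rfl fun x _ => ?_
  rw [sum_swap13 (fun x1 x2 x3 => A p.1 x2 * star (B p.2 x3) * ρ (x2, x1) (x, x3)
      * star (A q.1 x * star (B q.2 x1)))]
  refine Finset.sum_congr rfl fun x1 _ => Finset.sum_congr rfl fun x2 _ =>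
    Finset.sum_congr rfl fun x3 _ => ?_
  simp only [star_mul', star_star]
  ring

/-- PPT is preserved by separable superoperators: if `(1⊗T)(ρ) ≥ 0` and
`Σᵢ Aᵢ†Aᵢ ⊗ Bᵢ†Bᵢ = 1`, then `ρ' = Σᵢ (Aᵢ⊗Bᵢ) ρ (Aᵢ⊗Bᵢ)†` also has `(1⊗T)(ρ') ≥ 0`. -/
theorem stmt6 {nA nB : Type*} [Fintype nA] [Fintype nB] [DecidableEq nA] [DecidableEq nB]
    (ρ : Matrix (nA × nB) (nA × nB) ℂ) (hρ : ρ.PosSemidef) (htr : ρ.trace = 1)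
    (hppt : (ptranspose ρ).PosSemidef)
    (k : ℕ) (A : Fin k → Matrix nA nA ℂ) (B : Fin k → Matrix nB nB ℂ)
    (hnorm : ∑ i, ((A i)ᴴ * A i) ⊗ₖ ((B i)ᴴ * B i) = 1) :
    (ptranspose (∑ i, (A i ⊗ₖ B i) * ρ * (A i ⊗ₖ B i)ᴴ)).PosSemidef := by
  have hsum : ptranspose (∑ i, (A i ⊗ₖ B i) * ρ * (A i ⊗ₖ B i)ᴴ)
      = ∑ i, ptranspose ((A i ⊗ₖ B i) * ρ * (A i ⊗ₖ B i)ᴴ) := by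
    ext p q
    simp [ptranspose, Matrix.sum_apply]
  rw [hsum]
  refine Finset.sum_induction _ _ (fun a b ha hb => ha.add hb) (Matrix.PosSemidef.zero) ?_
  intro i _
  rw [pt_conj]
  exact hppt.mul_mul_conjTranspose_same _
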